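/- arXiv:1709.07640 — 7 statements merged into one kernel-verified Lean document; each statement's English description precedes it below -/
import Mathlib

section
/- Let N be a square-free positive integer and let m be a positive integer with gcd(m,N) = 1. Then for any two distinct elements ω, ω' of Ω(m), the sets Γ₀(N)⁺·ω and Γ₀(N)⁺·ω' (products of matrices taken inside the 2×2 real matrices) are disjoint. -/
/-- The Fricke group `Γ₀(N)⁺`, as a set of `2 × 2` real matrices: matrices of the form
`e^{-1/2} • !![a, b; c, d]` with `a, b, c, d, e` integers, `a*d - b*c = e`, `e ∣ N`,
`e ∣ a`, `e ∣ d` and `N ∣ c`. -/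
noncomputable def FrickeGroup (N : ℕ) : Set (Matrix (Fin 2) (Fin 2) ℝ) :=
  {M | ∃ a b c d e : ℤ, 0 < e ∧ a * d - b * c = e ∧ e ∣ (N : ℤ) ∧ e ∣ a ∧ e ∣ d ∧
    (N : ℤ) ∣ c ∧ M = (Real.sqrt (e : ℝ))⁻¹ • !![(a : ℝ), (b : ℝ); (c : ℝ), (d : ℝ)]}

/-- The set `Ω(m)` of integer matrices `!![a, b; 0, d]` with `d > 0`, `a*d = m`,
`gcd(a, b, d) = 1` and `0 ≤ b < d`, regarded as real matrices. -/
def OmegaSet (m : ℕ) : Set (Matrix (Fin 2) (Fin 2) ℝ) :=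
  {M | ∃ a b d : ℤ, 0 < d ∧ a * d = (m : ℤ) ∧ Int.gcd a (Int.gcd b d) = 1 ∧
    0 ≤ b ∧ b < d ∧ M = !![(a : ℝ), (b : ℝ); 0, (d : ℝ)]}

/-!
Suppose `g ω = g' ω'` with `g = e^{-1/2} A`, `g' = e'^{-1/2} A'` in `Γ₀(N)⁺`. Comparing a nonzero
entry of the integer matrix `A' ω'` gives `e' x² = e y²`, and since `e, e'` are squarefree this
forces `e = e'`, hence `A ω = A' ω'`. The divisibility conditions on `A` and `A'` make
`A'⁻¹ A = e⁻¹ adj(A') A` an integer matrix `U` of determinant one with `U ω = ω'`. As `ω, ω'`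
are upper triangular with positive lower right entry, `U` is upper unitriangular, so `ω'` is
obtained from `ω` by adding a multiple of `d` to `b`; the normalisation `0 ≤ b < d` then gives
`ω = ω'`.
-/

open Matrix

theorem Matrix.map_fin_two_of {α β : Type*} (f : α → β) (a b c d : α) :
    (!![a, b; c, d]).map f = !![f a, f b; f c, f d] := by
  ext i j
  fin_cases i <;> fin_cases j <;> rfl

theorem Nat.eq_of_squarefree_of_mul_sq_eq {e f x y : ℕ} (he : Squarefree e) (hf : Squarefree f)
    (hx : x ≠ 0) (h : f * x ^ 2 = e * y ^ 2) : e = f := by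
  have hy : y ≠ 0 := by
    rintro rfl
    simp [hf.ne_zero, hx] at h
  refine Nat.eq_of_factorization_eq he.ne_zero hf.ne_zero fun p => ?_
  have hp := congrArg (Nat.factorization · p) h
  simp only [Nat.factorization_mul hf.ne_zero (pow_ne_zero 2 hx),
    Nat.factorization_mul he.ne_zero (pow_ne_zero 2 hy), Nat.factorization_pow,
    Finsupp.add_apply, Finsupp.smul_apply, smul_eq_mul] at hp
  have hep := (Nat.squarefree_iff_factorization_le_one he.ne_zero).1 he p
  have hfp := (Nat.squarefree_iff_factorization_le_one hf.ne_zero).1 hf p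
  omega

theorem Int.eq_of_squarefree_of_mul_sq_eq {e f x y : ℤ} (he₀ : 0 ≤ e) (hf₀ : 0 ≤ f)
    (he : Squarefree e) (hf : Squarefree f) (hx : x ≠ 0) (h : f * x ^ 2 = e * y ^ 2) :
    e = f := by
  have hnat : f.natAbs * x.natAbs ^ 2 = e.natAbs * y.natAbs ^ 2 := by
    simpa [Int.natAbs_mul, Int.natAbs_pow] using congrArg Int.natAbs h
  have := Nat.eq_of_squarefree_of_mul_sq_eq (Int.squarefree_natAbs.2 he)
    (Int.squarefree_natAbs.2 hf) (Int.natAbs_ne_zero.2 hx) hnat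
  omega

theorem eq_of_inv_sqrt_smul_map_intCast_eq {m n : Type*} {e e' : ℤ} (he : 0 < e) (he' : 0 < e')
    (hsq : Squarefree e) (hsq' : Squarefree e') {X Y : Matrix m n ℤ} (hY : Y ≠ 0)
    (h : (√(e : ℝ))⁻¹ • X.map (Int.castRingHom ℝ) = (√(e' : ℝ))⁻¹ • Y.map (Int.castRingHom ℝ)) :
    e = e' ∧ X = Y := by
  obtain ⟨i, j, hij⟩ : ∃ i j, Y i j ≠ 0 := by
    by_contra! hzero
    exact hY (Matrix.ext hzero)
  have hentry : (√(e : ℝ))⁻¹ * X i j = (√(e' : ℝ))⁻¹ * Y i j := by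
    simpa using congrFun (congrFun h i) j
  have hsquares : e * Y i j ^ 2 = e' * X i j ^ 2 := by
    have hsq := congrArg (· ^ 2) hentry
    simp only [mul_pow, inv_pow, Real.sq_sqrt (Int.cast_nonneg he.le),
      Real.sq_sqrt (Int.cast_nonneg he'.le)] at hsq
    have heR : (e : ℝ) ≠ 0 := by exact_mod_cast he.ne'
    have heR' : (e' : ℝ) ≠ 0 := by exact_mod_cast he'.ne'
    field_simp at hsq
    exact_mod_cast hsq.symm.trans (mul_comm _ _)
  obtain rfl : e = e' :=
    (Int.eq_of_squarefree_of_mul_sq_eq he'.le he.le hsq' hsq hij hsquares).symm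
  have hscalar : (√(e : ℝ))⁻¹ ≠ 0 := inv_ne_zero (Real.sqrt_pos.2 (by exact_mod_cast he)).ne'
  exact ⟨rfl, map_injective (Int.castRingHom ℝ).injective_int (smul_right_injective _ hscalar h)⟩

theorem eq_of_det_eq_one_mul_upperTriangular_eq {U : Matrix (Fin 2) (Fin 2) ℤ} (hU : U.det = 1)
    {a b d a' b' d' : ℤ} (ha : a ≠ 0) (hb : 0 ≤ b) (hbd : b < d) (hb' : 0 ≤ b') (hbd' : b' < d')
    (h : U * !![a, b; 0, d] = !![a', b'; 0, d']) : a = a' ∧ b = b' ∧ d = d' := by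
  rw [eta_fin_two U, mul_fin_two] at h
  rw [det_fin_two] at hU
  have h00 := congrFun (congrFun h 0) 0
  have h01 := congrFun (congrFun h 0) 1
  have h10 := congrFun (congrFun h 1) 0
  have h11 := congrFun (congrFun h 1) 1
  simp only [of_apply, cons_val', cons_val_zero, cons_val_one, empty_val', cons_val_fin_one,
    mul_zero, add_zero] at h00 h01 h10 h11
  have hU10 : U 1 0 = 0 := by simpa [ha] using h10
  simp only [hU10, mul_zero, sub_zero, zero_mul, zero_add] at hU h11
  have hU11 : U 1 1 = 1 := by
    rcases Int.eq_one_or_neg_one_of_mul_eq_one hU with h | h <;> nlinarith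
  have hU00 : U 0 0 = 1 := by simpa [hU11] using hU
  have hU01 : U 0 1 = 0 := by
    simp only [hU00, hU11, one_mul] at h01 h11
    subst h11
    nlinarith
  simp_all

/-- The integer matrices `e^{1/2} g` for `g ∈ Γ₀(N)⁺`, with `N ∣ c` weakened to `e ∣ c`. -/
structure IsAtkinLehner (e : ℤ) (A : Matrix (Fin 2) (Fin 2) ℤ) : Prop where
  det_eq : A.det = e
  dvd_topLeft : e ∣ A 0 0
  dvd_bottomLeft : e ∣ A 1 0
  dvd_bottomRight : e ∣ A 1 1

namespace IsAtkinLehner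

variable {e : ℤ} {A A' : Matrix (Fin 2) (Fin 2) ℤ}

theorem dvd_adjugate_mul (hA : IsAtkinLehner e A) (hA' : IsAtkinLehner e A') (i j : Fin 2) :
    e ∣ (A'.adjugate * A) i j := by
  obtain ⟨-, _, _, _⟩ := hA
  obtain ⟨-, _, _, _⟩ := hA'
  fin_cases i <;> fin_cases j <;> simp only [adjugate_fin_two, mul_apply, Fin.sum_univ_two] <;>
    simp only [Fin.zero_eta, Fin.mk_one, of_apply, cons_val', cons_val_zero, cons_val_one,
      empty_val', cons_val_fin_one, neg_mul] <;>
    apply dvd_add <;> try rw [dvd_neg]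
  all_goals first | exact Dvd.dvd.mul_left ‹_› _ | exact Dvd.dvd.mul_right ‹_› _

theorem exists_det_eq_one_adjugate_mul_eq_smul (hA : IsAtkinLehner e A)
    (hA' : IsAtkinLehner e A') (he : e ≠ 0) :
    ∃ U : Matrix (Fin 2) (Fin 2) ℤ, U.det = 1 ∧ A'.adjugate * A = e • U := by
  set U := (A'.adjugate * A).map (· / e)
  have hU : A'.adjugate * A = e • U := by
    ext i j
    exact (Int.mul_ediv_cancel' (dvd_adjugate_mul hA hA' i j)).symm
  refine ⟨U, ?_, hU⟩
  have hdet := congrArg det hU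
  rw [det_smul, det_mul, det_adjugate, hA.det_eq, hA'.det_eq] at hdet
  simp only [Fintype.card_fin, Nat.add_one_sub_one, pow_one] at hdet
  exact mul_left_cancel₀ (pow_ne_zero 2 he) (by rw [← hdet]; ring)

theorem eq_of_mul_upperTriangular_eq (hA : IsAtkinLehner e A) (hA' : IsAtkinLehner e A')
    (he : e ≠ 0) {a b d a' b' d' : ℤ} (ha : a ≠ 0) (hb : 0 ≤ b) (hbd : b < d) (hb' : 0 ≤ b')
    (hbd' : b' < d') (h : A * !![a, b; 0, d] = A' * !![a', b'; 0, d']) :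
    a = a' ∧ b = b' ∧ d = d' := by
  obtain ⟨U, hU, hAA'⟩ := hA.exists_det_eq_one_adjugate_mul_eq_smul hA' he
  refine eq_of_det_eq_one_mul_upperTriangular_eq hU ha hb hbd hb' hbd' ?_
  refine smul_right_injective _ he ?_
  change e • (U * _) = e • _
  rw [← Matrix.smul_mul, ← hAA', Matrix.mul_assoc, h, ← Matrix.mul_assoc, adjugate_mul,
    hA'.det_eq, smul_one_mul]

end IsAtkinLehner

theorem frickeGroup_cosets_disjoint_general (N m : ℕ) (hN : Squarefree N) (hm : 0 < m) :
    ∀ ω ∈ OmegaSet m, ∀ ω' ∈ OmegaSet m, ω ≠ ω' →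
      Disjoint ((fun g => g * ω) '' FrickeGroup N) ((fun g => g * ω') '' FrickeGroup N) := by
  rintro _ ⟨a, b, d, -, had, -, hb, hbd, rfl⟩ _ ⟨a', b', d', -, had', -, hb', hbd', rfl⟩ hne
  rw [Set.disjoint_left]
  rintro _ ⟨_, ⟨α, β, γ, δ, e, he, hdet, heN, hα, hδ, hNγ, rfl⟩, rfl⟩
    ⟨_, ⟨α', β', γ', δ', e', he', hdet', heN', hα', hδ', hNγ', rfl⟩, heq⟩
  have hsqN : Squarefree (N : ℤ) := Int.squarefree_natCast.2 hN
  have hY : !![α', β'; γ', δ'] * !![a', b'; 0, d'] ≠ 0 := by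
    refine ne_of_apply_ne det ?_
    rw [det_mul, det_fin_two_of, det_fin_two_of, hdet', det_zero, mul_zero, sub_zero, had']
    positivity
  obtain ⟨rfl, hAW⟩ := eq_of_inv_sqrt_smul_map_intCast_eq he he'
    (X := !![α, β; γ, δ] * !![a, b; 0, d]) (hsqN.squarefree_of_dvd heN)
    (hsqN.squarefree_of_dvd heN') hY (by
      simpa only [smul_mul_assoc, Matrix.map_mul, map_fin_two_of, eq_intCast, Int.cast_zero]
        using heq.symm)
  have ha : a ≠ 0 := left_ne_zero_of_mul (b := d) (by rw [had]; exact_mod_cast hm.ne')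
  obtain ⟨rfl, rfl, rfl⟩ := IsAtkinLehner.eq_of_mul_upperTriangular_eq
    ⟨by simp [hdet], hα, heN.trans hNγ, hδ⟩ ⟨by simp [hdet'], hα', heN.trans hNγ', hδ'⟩ he.ne'
    ha hb hbd hb' hbd' hAW
  exact hne rfl

/-- For `N` squarefree, `m` positive coprime to `N`, and distinct `ω, ω' ∈ Ω(m)`,
the sets `Γ₀(N)⁺ · ω` and `Γ₀(N)⁺ · ω'` are disjoint. -/
theorem frickeGroup_cosets_disjoint (N m : ℕ) (hN : Squarefree N) (hNpos : 0 < N)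
    (hm : 0 < m) (hcop : Nat.Coprime m N) :
    ∀ ω ∈ OmegaSet m, ∀ ω' ∈ OmegaSet m, ω ≠ ω' →
      Disjoint ((fun g => g * ω) '' FrickeGroup N) ((fun g => g * ω') '' FrickeGroup N) :=
  frickeGroup_cosets_disjoint_general N m hN hm
end

section
/- Let N be a square-free positive integer and let m be a positive integer with gcd(m,N) = 1. Then the group Γ₀(N) acts transitively on the sets Γ₀(N)·ω by multiplication on the right: for all ω, ω' ∈ Ω(m) there exists η ∈ Γ₀(N) such that Γ₀(N)·ω·η = Γ₀(N)·ω' as subsets of the 2×2 integer matrices. -/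
/-- The Hecke congruence subgroup `Γ₀(N)`, as a set of `2 × 2` integer matrices:
determinant one and lower-left entry divisible by `N`. -/
def Gamma0Set (N : ℕ) : Set (Matrix (Fin 2) (Fin 2) ℤ) :=
  {M | M.det = 1 ∧ (N : ℤ) ∣ M 1 0}

/-- The set `Ω(m)` of integer matrices `!![a, b; 0, d]` with `d > 0`, `a*d = m`,
`gcd(a, b, d) = 1` and `0 ≤ b < d`. -/
def OmegaSetInt (m : ℕ) : Set (Matrix (Fin 2) (Fin 2) ℤ) :=
  {M | ∃ a b d : ℤ, 0 < d ∧ a * d = (m : ℤ) ∧ Int.gcd a (Int.gcd b d) = 1 ∧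
    0 ≤ b ∧ b < d ∧ M = !![a, b; 0, d]}

/-- If `gcd(a, gcd(c, n)) = 1` then some value `a*x + c` is coprime to `n`. -/
lemma exists_coprime_nat (a c n : ℕ) (hn : 0 < n) (h : Nat.Coprime a (Nat.gcd c n)) :
    ∃ x : ℕ, Nat.Coprime (a * x + c) n := by
  classical
  refine ⟨∏ p ∈ n.primeFactors.filter (fun p => ¬ p ∣ c), p, ?_⟩
  set x := ∏ p ∈ n.primeFactors.filter (fun p => ¬ p ∣ c), p with hx
  by_contra hnc
  obtain ⟨p, hp, hpd⟩ := Nat.exists_prime_and_dvd hnc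
  have hpac : p ∣ a * x + c := hpd.trans (Nat.gcd_dvd_left _ _)
  have hpn : p ∣ n := hpd.trans (Nat.gcd_dvd_right _ _)
  by_cases hpc : p ∣ c
  · have hpa : ¬ p ∣ a := by
      intro hpa
      have : p ∣ Nat.gcd a (Nat.gcd c n) := Nat.dvd_gcd hpa (Nat.dvd_gcd hpc hpn)
      rw [h] at this
      exact hp.one_lt.ne' (Nat.dvd_one.mp this)
    have hpax : p ∣ a * x := (Nat.dvd_add_iff_left hpc).mpr hpac
    have hpx : p ∣ x := (hp.dvd_mul.mp hpax).resolve_left hpa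
    obtain ⟨q, hq, hpq⟩ := (hp.prime.dvd_finset_prod_iff _).mp hpx
    have hq' := Finset.mem_filter.mp hq
    have hqp : q.Prime := (Nat.mem_primeFactors.mp hq'.1).1
    have : p = q := (Nat.prime_dvd_prime_iff_eq hp hqp).mp hpq
    exact hq'.2 (this ▸ hpc)
  · have hpx : p ∣ x := Finset.dvd_prod_of_mem _ (Finset.mem_filter.mpr
      ⟨Nat.mem_primeFactors.mpr ⟨hp, hpn, hn.ne'⟩, hpc⟩)
    exact hpc ((Nat.dvd_add_iff_right (hpx.mul_left a)).mpr hpac)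

/-- Integer version of `exists_coprime_nat` (for nonnegative inputs). -/
lemma exists_coprime_int (a c n : ℤ) (ha : 0 ≤ a) (hc : 0 ≤ c) (hn : 0 < n)
    (h : Nat.Coprime a.natAbs (Int.gcd c n)) : ∃ x : ℤ, IsCoprime (a * x + c) n := by
  obtain ⟨x, hx⟩ := exists_coprime_nat a.natAbs c.natAbs n.natAbs
    (by simpa using hn.ne') h
  refine ⟨(x : ℤ), ?_⟩
  have := (Nat.isCoprime_iff_coprime).mpr hx
  push_cast at this
  rwa [abs_of_nonneg ha, abs_of_nonneg hc, abs_of_nonneg hn.le] at this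

lemma gamma0_mul {N : ℕ} {A B : Matrix (Fin 2) (Fin 2) ℤ}
    (hA : A ∈ Gamma0Set N) (hB : B ∈ Gamma0Set N) : A * B ∈ Gamma0Set N := by
  obtain ⟨hA1, hA2⟩ := hA
  obtain ⟨hB1, hB2⟩ := hB
  refine ⟨by rw [Matrix.det_mul, hA1, hB1, one_mul], ?_⟩
  have : (A * B) 1 0 = A 1 0 * B 0 0 + A 1 1 * B 1 0 := by
    simp [Matrix.mul_apply, Fin.sum_univ_two]
  rw [this]
  exact dvd_add (hA2.mul_right _) (hB2.mul_left _)

lemma gamma0_adjugate {N : ℕ} {A : Matrix (Fin 2) (Fin 2) ℤ}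
    (hA : A ∈ Gamma0Set N) : A.adjugate ∈ Gamma0Set N := by
  obtain ⟨hA1, hA2⟩ := hA
  refine ⟨by rw [Matrix.det_adjugate, hA1, one_pow], ?_⟩
  rw [Matrix.adjugate_fin_two]
  simpa using hA2.neg_right

/-- Every element of `Ω(m)` can be moved to `!![1, 0; 0, m]` by multiplying by an
element of `Γ₀(N)` on the right and by another one on the left. -/
lemma gamma0_reduce (N m : ℕ) (hNpos : 0 < N) (hm : 0 < m) (hcop : Nat.Coprime m N)
    (a b d : ℤ) (hd : 0 < d) (had : a * d = m)
    (hg : Int.gcd a (Int.gcd b d) = 1) (hb0 : 0 ≤ b) :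
    ∃ η ∈ Gamma0Set N, ∃ γ ∈ Gamma0Set N,
      !![a, b; 0, d] * η = γ * !![1, 0; 0, (m : ℤ)] := by
  have hmz : (0 : ℤ) < (m : ℤ) := by exact_mod_cast hm
  have hNz : (0 : ℤ) < (N : ℤ) := by exact_mod_cast hNpos
  have ha : 0 < a := by nlinarith
  have haN : Nat.Coprime a.natAbs N := by
    have hdvd : a ∣ (m : ℤ) := ⟨d, had.symm⟩
    have : a.natAbs ∣ m := by
      have := Int.natAbs_dvd_natAbs.mpr hdvd
      simpa using this
    exact (Nat.Coprime.coprime_dvd_left this hcop)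
  have hab : Nat.Coprime a.natAbs (Int.gcd b d) := by
    simpa [Int.gcd] using hg
  have hgcd : Nat.Coprime a.natAbs (Int.gcd ((N : ℤ) * b) ((N : ℤ) * d)) := by
    rw [Int.gcd_mul_left]
    simpa using Nat.Coprime.mul_right haN hab
  obtain ⟨x, hx⟩ := exists_coprime_int a ((N : ℤ) * b) ((N : ℤ) * d) ha.le
    (by positivity) (by positivity) hgcd
  obtain ⟨u, v, huv⟩ := hx
  refine ⟨!![x, -b * u - d * v; (N : ℤ), a * u], ?_, !![a * x + N * b, -v; N * d, u], ?_, ?_⟩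
  · constructor
    · rw [Matrix.det_fin_two_of]; linear_combination huv
    · simp
  · constructor
    · rw [Matrix.det_fin_two_of]; linear_combination huv
    · exact ⟨d, rfl⟩
  · rw [Matrix.mul_fin_two, Matrix.mul_fin_two]
    ext i j
    fin_cases i <;> fin_cases j <;> simp <;>
      first
      | ring1
      | linear_combination (-v) * had
      | linear_combination u * had

/-- For `N` squarefree and `m` positive coprime to `N`, the group `Γ₀(N)` acts transitively
on the sets `Γ₀(N) · ω` for `ω ∈ Ω(m)` by multiplication on the right: for all
`ω, ω' ∈ Ω(m)` there exists `η ∈ Γ₀(N)` with `Γ₀(N) · ω · η = Γ₀(N) · ω'`. -/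
theorem gamma0_acts_transitively (N m : ℕ) (hN : Squarefree N) (hNpos : 0 < N)
    (hm : 0 < m) (hcop : Nat.Coprime m N) :
    ∀ ω ∈ OmegaSetInt m, ∀ ω' ∈ OmegaSetInt m, ∃ η ∈ Gamma0Set N,
      (fun g => g * ω * η) '' Gamma0Set N = (fun g => g * ω') '' Gamma0Set N := by
  rintro ω ⟨a, b, d, hd, had, hg, hb0, hbd, rfl⟩
  rintro ω' ⟨a', b', d', hd', had', hg', hb0', hbd', rfl⟩
  obtain ⟨η₁, hη₁, γ₁, hγ₁, h₁⟩ := gamma0_reduce N m hNpos hm hcop a b d hd had hg hb0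
  obtain ⟨η₂, hη₂, γ₂, hγ₂, h₂⟩ := gamma0_reduce N m hNpos hm hcop a' b' d' hd' had' hg' hb0'
  set γ : Matrix (Fin 2) (Fin 2) ℤ := γ₁ * γ₂.adjugate with hγdef
  have hγ : γ ∈ Gamma0Set N := gamma0_mul hγ₁ (gamma0_adjugate hγ₂)
  have hη2inv : η₂ * η₂.adjugate = 1 := by
    rw [Matrix.mul_adjugate, hη₂.1, one_smul]
  have hγ2inv : γ₂.adjugate * γ₂ = 1 := by
    rw [Matrix.adjugate_mul, hγ₂.1, one_smul]
  have hγinv : γ.adjugate * γ = 1 := by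
    rw [Matrix.adjugate_mul, hγ.1, one_smul]
  refine ⟨η₁ * η₂.adjugate, gamma0_mul hη₁ (gamma0_adjugate hη₂), ?_⟩
  have hM0 : !![(1 : ℤ), 0; 0, (m : ℤ)] = γ₂.adjugate * (!![a', b'; 0, d'] * η₂) := by
    rw [h₂, ← mul_assoc, hγ2inv, one_mul]
  have key : !![a, b; 0, d] * (η₁ * η₂.adjugate) = γ * !![a', b'; 0, d'] := by
    rw [← mul_assoc, h₁, hM0, hγdef]
    simp only [mul_assoc]
    rw [hη2inv, mul_one]
  ext M
  simp only [Set.mem_image]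
  constructor
  · rintro ⟨g, hg, rfl⟩
    refine ⟨g * γ, gamma0_mul hg hγ, ?_⟩
    rw [mul_assoc g, ← key, ← mul_assoc]
  · rintro ⟨g, hg, rfl⟩
    refine ⟨g * γ.adjugate, gamma0_mul hg (gamma0_adjugate hγ), ?_⟩
    rw [mul_assoc, key, ← mul_assoc, mul_assoc g, hγinv, mul_one]
end

section
/- Let A, B, C, D, E be integers, and let P, Q ∈ ℤ[X] be polynomials such that P has degree n ≥ 2 and leading coefficient 1 or −1, and Q is nonzero of degree at most n − 2. Let x ∈ ℂ with Q(x) ≠ 0, set y = −P(x)/Q(x), and suppose that y² = x³ + A·x·y + B·x² + C·y + D·x + E. Then x is a root of a monic polynomial of degree 2n with integer coefficients; in particular x is an algebraic integer, y is an algebraic integer, y lies in the subfield ℚ(x) of ℂ generated by x over ℚ, and the discriminant (A·x + C)² + 4·(x³ + B·x² + D·x + E) is the square of an element of ℚ(x). -/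
/-!
Since `P(x) = -y Q(x)`, substituting `y = -P/Q` into the cubic and multiplying by `Q(x)²` gives
`P(x)² + (A x + C) P(x) Q(x) - (x³ + B x² + D x + E) Q(x)² = 0`. The degree bound on `Q` makes
`P²` the dominant term, so this is a monic integer polynomial of degree `2n` vanishing at `x`.
Then `y` is a root of the monic quadratic `Y² - (A x + C) Y - (x³ + ⋯)` with integral coefficients,
and the discriminant of that quadratic is `(2y - A x - C)²`.
-/

open Polynomial
open scoped IntermediateField

namespace Polynomial

variable {R : Type*} [CommRing R]

theorem monic_sq_and_natDegree_sq_of_leadingCoeff_eq_one_or_neg_one {P : R[X]}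
    (h : P.leadingCoeff = 1 ∨ P.leadingCoeff = -1) :
    (P ^ 2).Monic ∧ (P ^ 2).natDegree = 2 * P.natDegree := by
  obtain ⟨P', hP', hsq, hdeg⟩ :
      ∃ P' : R[X], P'.Monic ∧ P' ^ 2 = P ^ 2 ∧ P'.natDegree = P.natDegree := by
    rcases h with h | h
    · exact ⟨P, h, rfl, rfl⟩
    · exact ⟨-P, by rw [Monic, leadingCoeff_neg, h, neg_neg], neg_sq P, natDegree_neg P⟩
  rw [← hsq, ← hdeg]
  exact ⟨hP'.pow 2, hP'.natDegree_pow 2⟩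

/-- `Q² · (Y² - L Y - M)` at `Y = -P/Q`. -/
noncomputable def clearedQuadratic (L M P Q : R[X]) : R[X] :=
  P ^ 2 + (L * P * Q - M * Q ^ 2)

theorem aeval_clearedQuadratic_eq_zero {S : Type*} [CommRing S] [Algebra R S]
    {L M P Q : R[X]} {x y : S} (hy : y * aeval x Q = -aeval x P)
    (hquad : y ^ 2 = aeval x L * y + aeval x M) :
    aeval x (clearedQuadratic L M P Q) = 0 := by
  simp only [clearedQuadratic, map_add, map_sub, map_mul, map_pow]
  linear_combination (aeval x P - y * aeval x Q + aeval x L * aeval x Q) * hy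
    + aeval x Q ^ 2 * hquad

theorem natDegree_mul_sub_mul_sq_lt {L M P Q : R[X]} {n : ℕ} (hn : 2 ≤ n)
    (hL : L.natDegree ≤ 1) (hM : M.natDegree ≤ 3) (hP : P.natDegree = n)
    (hQ : Q.natDegree ≤ n - 2) : (L * P * Q - M * Q ^ 2).natDegree < 2 * n := by
  have hLPQ : (L * P * Q).natDegree ≤ 1 + n + (n - 2) :=
    natDegree_mul_le.trans (add_le_add (natDegree_mul_le.trans (add_le_add hL hP.le)) hQ)
  have hMQ : (M * Q ^ 2).natDegree ≤ 3 + 2 * (n - 2) :=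
    natDegree_mul_le.trans (add_le_add hM (natDegree_pow_le.trans (by omega)))
  exact (natDegree_sub_le _ _).trans_lt (max_lt (by omega) (by omega))

theorem monic_and_natDegree_clearedQuadratic {L M P Q : R[X]} {n : ℕ} (hn : 2 ≤ n)
    (hL : L.natDegree ≤ 1) (hM : M.natDegree ≤ 3) (hP : P.natDegree = n)
    (hPlead : P.leadingCoeff = 1 ∨ P.leadingCoeff = -1) (hQ : Q.natDegree ≤ n - 2) :
    (clearedQuadratic L M P Q).Monic ∧ (clearedQuadratic L M P Q).natDegree = 2 * n := by
  obtain ⟨hP2, hP2deg⟩ := monic_sq_and_natDegree_sq_of_leadingCoeff_eq_one_or_neg_one hPlead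
  rw [hP] at hP2deg
  have hlt := natDegree_mul_sub_mul_sq_lt hn hL hM hP hQ
  rw [← hP2deg] at hlt
  exact ⟨hP2.add_of_left (degree_lt_degree hlt), by
    rw [clearedQuadratic, natDegree_add_eq_left_of_natDegree_lt hlt, hP2deg]⟩

theorem aeval_mem_adjoin_simple {F E : Type*} [Field F] [Field E] [Algebra F E]
    [Algebra R F] [Algebra R E] [IsScalarTower R F E] (p : R[X]) (x : E) :
    aeval x p ∈ IntermediateField.adjoin F {x} := by
  rw [← aeval_map_algebraMap F]
  exact IntermediateField.algebra_adjoin_le_adjoin F _ (aeval_mem_adjoin_singleton F x)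

end Polynomial

theorem IsIntegral.of_sq_eq_mul_add {R A : Type*} [CommRing R] [CommRing A] [Algebra R A]
    {a b y : A} (ha : IsIntegral R a) (hb : IsIntegral R b) (h : y ^ 2 = a * y + b) :
    IsIntegral R y := by
  let S := integralClosure R A
  refine isIntegral_trans (A := S) y ⟨X ^ 2 - C ⟨a, ha⟩ * X - C ⟨b, hb⟩, ?_, ?_⟩
  · rw [sub_sub]
    exact monic_X_pow_sub (degree_linear_le.trans_lt (by norm_num))
  · simp [h]

theorem IsIntegral.aeval {R A : Type*} [CommRing R] [CommRing A] [Algebra R A] {x : A}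
    (hx : IsIntegral R x) (p : R[X]) : IsIntegral R (aeval x p) :=
  adjoin_le_integralClosure hx (aeval_mem_adjoin_singleton R x)

theorem algebraic_integrality_from_modular_polynomial_general
    (A B C D E : ℤ) (P Q : Polynomial ℤ) (n : ℕ) (hn : 2 ≤ n)
    (hPdeg : P.natDegree = n) (hPlead : P.leadingCoeff = 1 ∨ P.leadingCoeff = -1)
    (hQdeg : Q.natDegree ≤ n - 2)
    (x y : ℂ) (hQx : Polynomial.aeval x Q ≠ 0)
    (hy : y = -(Polynomial.aeval x P) / (Polynomial.aeval x Q))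
    (hcubic : y ^ 2 = x ^ 3 + (A : ℂ) * x * y + (B : ℂ) * x ^ 2 + (C : ℂ) * y
      + (D : ℂ) * x + (E : ℂ)) :
    (∃ f : Polynomial ℤ, f.Monic ∧ f.natDegree = 2 * n ∧ Polynomial.aeval x f = 0) ∧
    IsIntegral ℤ x ∧ IsIntegral ℤ y ∧
    y ∈ IntermediateField.adjoin ℚ ({x} : Set ℂ) ∧
    ∃ w ∈ IntermediateField.adjoin ℚ ({x} : Set ℂ),
      ((A : ℂ) * x + (C : ℂ)) ^ 2
        + 4 * (x ^ 3 + (B : ℂ) * x ^ 2 + (D : ℂ) * x + (E : ℂ)) = w ^ 2 := by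
  set L : ℤ[X] := Polynomial.C A * X + Polynomial.C C
  set M : ℤ[X] := X ^ 3 + Polynomial.C B * X ^ 2 + Polynomial.C D * X + Polynomial.C E
  have hLx : aeval x L = A * x + C := by simp [L]
  have hMx : aeval x M = x ^ 3 + B * x ^ 2 + D * x + E := by simp [M]
  have hquad : y ^ 2 = aeval x L * y + aeval x M := by
    rw [hLx, hMx]; linear_combination hcubic
  have hyQ : y * aeval x Q = -aeval x P := by rw [hy]; field_simp
  obtain ⟨hmonic, hdeg⟩ := monic_and_natDegree_clearedQuadratic (L := L) (M := M) hn
    (by simp only [L]; compute_degree) (by simp only [M]; compute_degree) hPdeg hPlead hQdeg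
  have hroot := aeval_clearedQuadratic_eq_zero hyQ hquad
  have hx : IsIntegral ℤ x := ⟨_, hmonic, hroot⟩
  have hyK : y ∈ ℚ⟮x⟯ := hy ▸ div_mem (neg_mem (aeval_mem_adjoin_simple P x))
    (aeval_mem_adjoin_simple Q x)
  refine ⟨⟨_, hmonic, hdeg, hroot⟩, hx, (hx.aeval L).of_sq_eq_mul_add (hx.aeval M) hquad, hyK,
    2 * y - aeval x L, ?_, ?_⟩
  · exact sub_mem (mul_mem (ofNat_mem _ 2) hyK) (aeval_mem_adjoin_simple L x)
  · rw [← hLx, ← hMx]; linear_combination -4 * hquad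

/-- If `P, Q ∈ ℤ[X]` with `P` of degree `n ≥ 2` and leading coefficient `±1`, `Q` nonzero of
degree at most `n - 2`, and `x ∈ ℂ` with `Q(x) ≠ 0`, `y = -P(x)/Q(x)` and
`y² = x³ + A x y + B x² + C y + D x + E`, then `x` is a root of a monic integer polynomial
of degree `2n`; in particular `x` and `y` are algebraic integers, `y ∈ ℚ(x)`, and the
discriminant `(A x + C)² + 4 (x³ + B x² + D x + E)` is the square of an element of `ℚ(x)`. -/
theorem algebraic_integrality_from_modular_polynomial
    (A B C D E : ℤ) (P Q : Polynomial ℤ) (n : ℕ) (hn : 2 ≤ n)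
    (hPdeg : P.natDegree = n) (hPlead : P.leadingCoeff = 1 ∨ P.leadingCoeff = -1)
    (hQne : Q ≠ 0) (hQdeg : Q.natDegree ≤ n - 2)
    (x y : ℂ) (hQx : Polynomial.aeval x Q ≠ 0)
    (hy : y = -(Polynomial.aeval x P) / (Polynomial.aeval x Q))
    (hcubic : y ^ 2 = x ^ 3 + (A : ℂ) * x * y + (B : ℂ) * x ^ 2 + (C : ℂ) * y
      + (D : ℂ) * x + (E : ℂ)) :
    (∃ f : Polynomial ℤ, f.Monic ∧ f.natDegree = 2 * n ∧ Polynomial.aeval x f = 0) ∧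
    IsIntegral ℤ x ∧ IsIntegral ℤ y ∧
    y ∈ IntermediateField.adjoin ℚ ({x} : Set ℂ) ∧
    ∃ w ∈ IntermediateField.adjoin ℚ ({x} : Set ℂ),
      ((A : ℂ) * x + (C : ℂ)) ^ 2
        + 4 * (x ^ 3 + (B : ℂ) * x ^ 2 + (D : ℂ) * x + (E : ℂ)) = w ^ 2 :=
  algebraic_integrality_from_modular_polynomial_general A B C D E P Q n hn hPdeg hPlead hQdeg x y
    hQx hy hcubic
end

section
/- Let p be a prime number, let ζ ∈ ℂ be a primitive p-th root of unity, and let c : ℤ → ℤ be a function with c(n) = 0 for all n < −2 and c(−2) = 1. In the field ℂ((t)) of formal Laurent series, set x = Σ_{n ≥ −2} c(n)·t^{p·n}; for each integer b with 0 ≤ b < p set f_b = Σ_{n ≥ −2} c(n)·ζ^{b·n}·t^{n}; and set f_∞ = Σ_{n ≥ −2} c(n)·t^{p²·n}. Then the Laurent series F = (x − f_∞)·∏_{b=0}^{p−1} (x − f_b) is nonzero, the smallest exponent k for which the coefficient of t^k in F is nonzero equals −4p², and the coefficient of t^{−4p²} in F equals −1. -/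
/-!
Every factor of `F` has an easily read lowest term: `x` starts with `t^(-2p)` and each `f_b`
only at `t^(-2)`, so `x - f_b` starts with `t^(-2p)`; `f_∞` starts with `t^(-2p²)`, below `x`,
so `x - f_∞` starts with `-t^(-2p²)`. Over the domain `ℂ` orders add and leading coefficients
multiply, so `F` starts with `-t^(-2p² - p·2p) = -t^(-4p²)`.
-/

namespace HahnSeries

variable {Γ R : Type*}

section Order

variable [LinearOrder Γ] [Zero R] {x : R⟦Γ⟧} {g : Γ}

theorem orderTop_eq_of_coeff_ne_zero_of_forall_lt (hg : x.coeff g ≠ 0)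
    (hlt : ∀ j < g, x.coeff j = 0) : x.orderTop = g :=
  le_antisymm (orderTop_le_of_coeff_ne_zero hg)
    (le_orderTop_iff_forall.2 fun j hj => hlt j (WithTop.coe_lt_coe.1 hj))

theorem leadingCoeff_eq_coeff_of_orderTop_eq (hg : x.orderTop = g) :
    x.leadingCoeff = x.coeff g := by
  simp [leadingCoeff, hg]

theorem order_eq_of_orderTop_eq [Zero Γ] (hg : x.orderTop = g) : x.order = g := by
  have hx : x ≠ 0 := orderTop_ne_top.1 (hg ▸ WithTop.coe_ne_top)
  rw [← WithTop.coe_inj, order_eq_orderTop_of_ne_zero hx, hg]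

end Order

section Prod

variable [AddCommMonoid Γ] [LinearOrder Γ] [IsOrderedCancelAddMonoid Γ]
  [CommSemiring R] [NoZeroDivisors R] {ι : Type*}

theorem orderTop_prod [Nontrivial R] (s : Finset ι) (f : ι → R⟦Γ⟧) :
    (∏ i ∈ s, f i).orderTop = ∑ i ∈ s, (f i).orderTop := by
  classical
  induction s using Finset.induction_on with
  | empty => simp
  | insert i s hi ih => simp [Finset.prod_insert hi, Finset.sum_insert hi, ih]

theorem leadingCoeff_prod (s : Finset ι) (f : ι → R⟦Γ⟧) :
    (∏ i ∈ s, f i).leadingCoeff = ∏ i ∈ s, (f i).leadingCoeff := by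
  classical
  induction s using Finset.induction_on with
  | empty => simp
  | insert i s hi ih => simp [Finset.prod_insert hi, ih]

end Prod

end HahnSeries

namespace LaurentSeries

variable {R : Type*} [Zero R] {y : LaurentSeries R} {c : ℤ → R} {d N : ℤ}

theorem coeff_mul_eq_of_coeff_eq_ite_dvd (hy : ∀ k, y.coeff k = if d ∣ k then c (k / d) else 0)
    (hd : d ≠ 0) (n : ℤ) : y.coeff (d * n) = c n := by
  rw [hy, if_pos (dvd_mul_right d n), Int.mul_ediv_cancel_left n hd]

theorem coeff_eq_zero_of_coeff_eq_ite_dvd (hy : ∀ k, y.coeff k = if d ∣ k then c (k / d) else 0)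
    (hd : 0 < d) (hc : ∀ n < N, c n = 0) {k : ℤ} (hk : k < d * N) : y.coeff k = 0 := by
  rw [hy]
  split_ifs with hdk
  · obtain ⟨n, rfl⟩ := hdk
    rw [Int.mul_ediv_cancel_left n hd.ne']
    exact hc n (lt_of_mul_lt_mul_left hk hd.le)
  · rfl

theorem orderTop_of_coeff_eq_ite_dvd (hy : ∀ k, y.coeff k = if d ∣ k then c (k / d) else 0)
    (hd : 0 < d) (hc : ∀ n < N, c n = 0) (hN : c N ≠ 0) : y.orderTop = ↑(d * N) :=
  HahnSeries.orderTop_eq_of_coeff_ne_zero_of_forall_lt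
    (by rwa [coeff_mul_eq_of_coeff_eq_ite_dvd hy hd.ne'])
    fun _ hk => coeff_eq_zero_of_coeff_eq_ite_dvd hy hd hc hk

theorem leadingCoeff_of_coeff_eq_ite_dvd (hy : ∀ k, y.coeff k = if d ∣ k then c (k / d) else 0)
    (hd : 0 < d) (hc : ∀ n < N, c n = 0) (hN : c N ≠ 0) : y.leadingCoeff = c N := by
  rw [HahnSeries.leadingCoeff_eq_coeff_of_orderTop_eq (orderTop_of_coeff_eq_ite_dvd hy hd hc hN),
    coeff_mul_eq_of_coeff_eq_ite_dvd hy hd.ne']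

end LaurentSeries

open HahnSeries LaurentSeries in
theorem modular_product_at_x_order_general (p : ℕ) (hp : p.Prime) (ζ : ℂ)
    (c : ℤ → ℤ) (hc : ∀ n : ℤ, n < -2 → c n = 0)
    (hc2 : c (-2) = 1)
    (x finf : LaurentSeries ℂ) (f : ℕ → LaurentSeries ℂ)
    (hx : ∀ k : ℤ, x.coeff k = if (p : ℤ) ∣ k then (c (k / (p : ℤ)) : ℂ) else 0)
    (hf : ∀ b : ℕ, b < p → ∀ k : ℤ, (f b).coeff k = (c k : ℂ) * ζ ^ ((b : ℤ) * k))
    (hfinf : ∀ k : ℤ, finf.coeff k =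
      if ((p : ℤ) ^ 2 ∣ k) then (c (k / (p : ℤ) ^ 2) : ℂ) else 0) :
    (x - finf) * ∏ b ∈ Finset.range p, (x - f b) ≠ 0 ∧
    ((x - finf) * ∏ b ∈ Finset.range p, (x - f b)).order = -(4 * (p : ℤ) ^ 2) ∧
    ((x - finf) * ∏ b ∈ Finset.range p, (x - f b)).coeff (-(4 * (p : ℤ) ^ 2)) = -1 := by
  have hp2 : (2 : ℤ) ≤ p := by exact_mod_cast hp.two_le
  have hc' : ∀ n < -2, (c n : ℂ) = 0 := fun n hn => by simp [hc n hn]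
  have hc2' : (c (-2) : ℂ) = 1 := by simp [hc2]
  have hc2_ne : (c (-2) : ℂ) ≠ 0 := by simp [hc2']
  have hx_top := orderTop_of_coeff_eq_ite_dvd hx (by omega) hc' hc2_ne
  have hfinf_top := orderTop_of_coeff_eq_ite_dvd hfinf (by positivity) hc' hc2_ne
  have hx_lt_f (b : ℕ) (hb : b < p) : x.orderTop < (f b).orderTop := by
    refine hx_top ▸ lt_of_lt_of_le (WithTop.coe_lt_coe.2 (by nlinarith : (p : ℤ) * -2 < -2)) ?_
    exact le_orderTop_iff_forall.2 fun k hk => by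
      rw [hf b hb, hc' k (WithTop.coe_lt_coe.1 hk), zero_mul]
  have hfinf_lt_x : finf.orderTop < x.orderTop := by
    rw [hx_top, hfinf_top]
    exact WithTop.coe_lt_coe.2 (by nlinarith)
  have hF_top : ((x - finf) * ∏ b ∈ Finset.range p, (x - f b)).orderTop =
      ((-(4 * (p : ℤ) ^ 2) : ℤ) : WithTop ℤ) := by
    rw [orderTop_mul, orderTop_prod, ← neg_sub, orderTop_neg, orderTop_sub hfinf_lt_x,
      Finset.sum_congr rfl fun b hb => orderTop_sub (hx_lt_f b (Finset.mem_range.1 hb)),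
      Finset.sum_const, Finset.card_range, hx_top, hfinf_top, ← WithTop.coe_nsmul,
      ← WithTop.coe_add, nsmul_eq_mul]
    congr 1
    ring
  have hF_lc : ((x - finf) * ∏ b ∈ Finset.range p, (x - f b)).leadingCoeff = -1 := by
    rw [leadingCoeff_mul, leadingCoeff_prod, ← neg_sub, leadingCoeff_neg,
      leadingCoeff_sub hfinf_lt_x,
      Finset.prod_congr rfl fun b hb => leadingCoeff_sub (hx_lt_f b (Finset.mem_range.1 hb)),
      leadingCoeff_of_coeff_eq_ite_dvd hx (by omega) hc' hc2_ne,
      leadingCoeff_of_coeff_eq_ite_dvd hfinf (by positivity) hc' hc2_ne, hc2']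
    simp
  exact ⟨orderTop_ne_top.1 (hF_top ▸ WithTop.coe_ne_top), order_eq_of_orderTop_eq hF_top,
    by rw [← leadingCoeff_eq_coeff_of_orderTop_eq hF_top, hF_lc]⟩

/-- Let `p` be a prime, `ζ` a primitive `p`-th root of unity, and `c : ℤ → ℤ` with
`c(n) = 0` for `n < -2` and `c(-2) = 1`.  With `x = Σ_{n ≥ -2} c(n) t^{p n}`,
`f_b = Σ_{n ≥ -2} c(n) ζ^{b n} t^n` for `0 ≤ b < p`, and `f_∞ = Σ_{n ≥ -2} c(n) t^{p² n}`
in `ℂ((t))`, the Laurent series `F = (x - f_∞) · ∏_{b=0}^{p-1} (x - f_b)` is nonzero, its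
order (least exponent with nonzero coefficient) is `-4p²`, and its coefficient at
`t^{-4p²}` is `-1`. -/
theorem modular_product_at_x_order (p : ℕ) (hp : p.Prime) (ζ : ℂ)
    (hζ : IsPrimitiveRoot ζ p) (c : ℤ → ℤ) (hc : ∀ n : ℤ, n < -2 → c n = 0)
    (hc2 : c (-2) = 1)
    (x finf : LaurentSeries ℂ) (f : ℕ → LaurentSeries ℂ)
    (hx : ∀ k : ℤ, x.coeff k = if (p : ℤ) ∣ k then (c (k / (p : ℤ)) : ℂ) else 0)
    (hf : ∀ b : ℕ, b < p → ∀ k : ℤ, (f b).coeff k = (c k : ℂ) * ζ ^ ((b : ℤ) * k))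
    (hfinf : ∀ k : ℤ, finf.coeff k =
      if ((p : ℤ) ^ 2 ∣ k) then (c (k / (p : ℤ) ^ 2) : ℂ) else 0) :
    (x - finf) * ∏ b ∈ Finset.range p, (x - f b) ≠ 0 ∧
    ((x - finf) * ∏ b ∈ Finset.range p, (x - f b)).order = -(4 * (p : ℤ) ^ 2) ∧
    ((x - finf) * ∏ b ∈ Finset.range p, (x - f b)).coeff (-(4 * (p : ℤ) ^ 2)) = -1 :=
  modular_product_at_x_order_general p hp ζ c hc hc2 x finf f hx hf hfinf
end

section
/- The polynomial X⁵ − 10X⁴ − 481X³ − 4440X² − 16428X − 21904 is irreducible over the field ℚ(√37, √−2), the subfield of ℂ generated over ℚ by √37 and i√2. -/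
/-!
Reduced mod 3 the quintic becomes `X⁵ + 2X⁴ + 2X³ + 2`, which has no root and no monic quadratic
factor in `𝔽₃[X]`, so the quintic is irreducible over `ℚ`. The genus field `K` has degree at most 4
over `ℚ`, prime to 5. For a root `α` of the quintic, `[K(α) : ℚ] = [K : ℚ] · [K(α) : K]` is
divisible by `[ℚ(α) : ℚ] = 5`, hence so is `[K(α) : K]`, and the quintic stays irreducible over `K`.
-/

open Polynomial IntermediateField Module

theorem minpoly.map_eq_of_coprime_finrank {F K L : Type*} [Field F] [Field K] [Field L]
    [Algebra F K] [Algebra K L] [Algebra F L] [IsScalarTower F K L] [FiniteDimensional F K]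
    {α : L} (hα : IsIntegral F α) (hcop : (minpoly F α).natDegree.Coprime (finrank F K)) :
    (minpoly F α).map (algebraMap F K) = minpoly K α := by
  have hαK : IsIntegral K α := hα.tower_top
  have hdvd : (minpoly F α).natDegree ∣ finrank F K * (minpoly K α).natDegree := by
    rw [← adjoin.finrank hαK, finrank_mul_finrank]
    have := adjoin.finiteDimensional hαK
    have := FiniteDimensional.trans F K K⟮α⟯
    have : IsScalarTower F K⟮α⟯ L := .of_algebraMap_eq fun _ ↦ rfl
    have h := minpoly.degree_dvd (K := F) (L := K⟮α⟯)
      (x := ⟨α, mem_adjoin_simple_self K α⟩) (.of_finite F _)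
    rwa [← minpoly.algebraMap_eq (algebraMap K⟮α⟯ L).injective] at h
  refine eq_of_monic_of_dvd_of_natDegree_le (minpoly.monic hαK) ((minpoly.monic hα).map _)
    (minpoly.dvd_map_of_isScalarTower F K α) ?_
  rw [natDegree_map]
  exact Nat.le_of_dvd (minpoly.natDegree_pos hαK) (hcop.dvd_of_dvd_mul_left hdvd)

theorem Polynomial.Irreducible.map_of_coprime_finrank {F K : Type*} [Field F] [Field K]
    [Algebra F K] [FiniteDimensional F K] {f : F[X]} (hf : Irreducible f)
    (hcop : f.natDegree.Coprime (finrank F K)) : Irreducible (f.map (algebraMap F K)) := by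
  obtain ⟨α, hα⟩ := IsAlgClosed.exists_aeval_eq_zero (AlgebraicClosure K) f
    (degree_pos_of_irreducible hf).ne'
  have hint : IsIntegral F α := IsAlgebraic.isIntegral ⟨f, hf.ne_zero, hα⟩
  have hmin : f * C f.leadingCoeff⁻¹ = minpoly F α := minpoly.eq_of_irreducible hf hα
  rw [← natDegree_mul_leadingCoeff_inv _ hf.ne_zero, hmin] at hcop
  rw [← irreducible_mul_leadingCoeff_inv, leadingCoeff_map, ← map_inv₀, ← map_C,
    ← Polynomial.map_mul, hmin, minpoly.map_eq_of_coprime_finrank hint hcop]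
  exact minpoly.irreducible hint.tower_top

namespace IntermediateField

variable {F L : Type*} [Field F] [Field L] [Algebra F L] {x y : L} {a b : F}

theorem finiteDimensional_adjoin_of_sq_eq (hx : x ^ 2 = algebraMap F L a) :
    FiniteDimensional F F⟮x⟯ :=
  adjoin.finiteDimensional (.of_pow two_pos (hx ▸ isIntegral_algebraMap))

theorem finrank_adjoin_le_two_of_sq_eq (hx : x ^ 2 = algebraMap F L a) :
    finrank F F⟮x⟯ ≤ 2 := by
  rw [adjoin.finrank (.of_pow two_pos (hx ▸ isIntegral_algebraMap))]
  have h := minpoly.min F x (monic_X_pow_sub_C a two_ne_zero) (by simp [hx])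
  simpa [natDegree_X_pow_sub_C] using natDegree_le_natDegree h

theorem finiteDimensional_adjoin_pair_of_sq_eq (hx : x ^ 2 = algebraMap F L a)
    (hy : y ^ 2 = algebraMap F L b) : FiniteDimensional F F⟮x, y⟯ := by
  rw [Set.insert_eq, adjoin_union]
  have := finiteDimensional_adjoin_of_sq_eq hx
  have := finiteDimensional_adjoin_of_sq_eq hy
  infer_instance

theorem finrank_adjoin_pair_le_four_of_sq_eq (hx : x ^ 2 = algebraMap F L a)
    (hy : y ^ 2 = algebraMap F L b) : finrank F F⟮x, y⟯ ≤ 4 := by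
  rw [Set.insert_eq, adjoin_union]
  calc finrank F ↥(F⟮x⟯ ⊔ F⟮y⟯) ≤ finrank F F⟮x⟯ * finrank F F⟮y⟯ := finrank_sup_le _ _
    _ ≤ 2 * 2 := Nat.mul_le_mul (finrank_adjoin_le_two_of_sq_eq hx)
        (finrank_adjoin_le_two_of_sq_eq hy)

end IntermediateField

lemma eq_zero_of_quadratic_dvd_linear {R : Type*} [CommRing R] [IsDomain R] {b c r₁ r₀ : R}
    (h : X ^ 2 + C b * X + C c ∣ C r₁ * X + C r₀) : r₁ = 0 ∧ r₀ = 0 := by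
  have hdeg : (C r₁ * X + C r₀).natDegree < (X ^ 2 + C b * X + C c).natDegree := by
    rw [(isMonicOfDegree_add_add_two b c).natDegree_eq]
    exact natDegree_linear_le.trans_lt one_lt_two
  have hzero := eq_zero_of_dvd_of_natDegree_lt h hdeg
  exact ⟨by simpa using congrArg (coeff · 1) hzero, by simpa using congrArg (coeff · 0) hzero⟩

noncomputable def quintic (R : Type*) [Ring R] : R[X] :=
  X ^ 5 - 10 * X ^ 4 - 481 * X ^ 3 - 4440 * X ^ 2 - 16428 * X - 21904

lemma map_quintic {R S : Type*} [Ring R] [Ring S] (f : R →+* S) :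
    (quintic R).map f = quintic S := by
  simp [quintic]

lemma monic_quintic (R : Type*) [Ring R] : (quintic R).Monic := by
  unfold quintic; monicity!

lemma natDegree_quintic (R : Type*) [Ring R] [Nontrivial R] : (quintic R).natDegree = 5 := by
  unfold quintic; compute_degree!

lemma quintic_zmod_three : quintic (ZMod 3) = X ^ 5 + 2 * X ^ 4 + 2 * X ^ 3 + 2 := by
  unfold quintic; reduce_mod_char

lemma not_isRoot_quintic_zmod_three (r : ZMod 3) : ¬ (quintic (ZMod 3)).IsRoot r := by
  simp only [quintic_zmod_three, IsRoot, eval_add, eval_mul, eval_pow, eval_X, eval_ofNat]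
  revert r; decide

lemma quintic_zmod_three_eq_mul_add (b c : ZMod 3) :
    quintic (ZMod 3) = (X ^ 2 + C b * X + C c) *
        (X ^ 3 + (2 - C b) * X ^ 2 + (2 - C c - 2 * C b + C b ^ 2) * X
          + (-2 * C c - 2 * C b + 2 * C b * C c + 2 * C b ^ 2 - C b ^ 3))
      + (C (-2 * c + c ^ 2 + 4 * b * c + 2 * b ^ 2 - 3 * b ^ 2 * c - 2 * b ^ 3 + b ^ 4) * X
      + C (2 + 2 * c ^ 2 + 2 * b * c - 2 * b * c ^ 2 - 2 * b ^ 2 * c + b ^ 3 * c)) := by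
  simp only [quintic_zmod_three, map_add, map_sub, map_mul, map_pow, map_ofNat, map_neg]
  ring

lemma not_quadratic_dvd_quintic_zmod_three (b c : ZMod 3) :
    ¬ X ^ 2 + C b * X + C c ∣ quintic (ZMod 3) := by
  intro hdvd
  rw [quintic_zmod_three_eq_mul_add b c, dvd_add_right (dvd_mul_right _ _)] at hdvd
  obtain ⟨h₁, h₀⟩ := eq_zero_of_quadratic_dvd_linear hdvd
  clear hdvd
  revert b c
  decide

theorem irreducible_quintic_zmod_three : Irreducible (quintic (ZMod 3)) := by
  have hne : quintic (ZMod 3) ≠ 1 := fun h ↦ by simpa [h] using natDegree_quintic (ZMod 3)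
  rw [(monic_quintic _).irreducible_iff_lt_natDegree_lt hne, natDegree_quintic]
  intro q hq hdeg
  obtain ⟨hpos, hle⟩ := Finset.mem_Ioc.mp hdeg
  interval_cases hq_deg : q.natDegree
  · obtain ⟨r, rfl⟩ := isMonicOfDegree_one_iff.mp ⟨hq_deg, hq⟩
    rw [← sub_neg_eq_add, ← map_neg, dvd_iff_isRoot]
    exact not_isRoot_quintic_zmod_three _
  · obtain ⟨b, c, rfl⟩ := isMonicOfDegree_two_iff.mp ⟨hq_deg, hq⟩
    exact not_quadratic_dvd_quintic_zmod_three b c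

theorem irreducible_quintic_int : Irreducible (quintic ℤ) :=
  (monic_quintic ℤ).irreducible_of_irreducible_map (Int.castRingHom (ZMod 3)) _
    (by rw [map_quintic]; exact irreducible_quintic_zmod_three)

theorem irreducible_quintic_rat : Irreducible (quintic ℚ) :=
  map_quintic (Int.castRingHom ℚ) ▸
    (IsPrimitive.Int.irreducible_iff_irreducible_map_cast (monic_quintic ℤ).isPrimitive).mp
      irreducible_quintic_int

/-- The quintic `X⁵ − 10X⁴ − 481X³ − 4440X² − 16428X − 21904` is irreducible over the
genus field `ℚ(√37, √−2)` of `ℚ(√−74)`. -/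
theorem quintic_irreducible_over_genus_field :
    Irreducible (Polynomial.X ^ 5 - 10 * Polynomial.X ^ 4 - 481 * Polynomial.X ^ 3
        - 4440 * Polynomial.X ^ 2 - 16428 * Polynomial.X - 21904 :
      Polynomial (IntermediateField.adjoin ℚ
        ({(Real.sqrt 37 : ℂ), Complex.I * (Real.sqrt 2 : ℂ)} : Set ℂ))) := by
  have hsqrt37 : ((Real.sqrt 37 : ℝ) : ℂ) ^ 2 = algebraMap ℚ ℂ 37 := by
    rw [← Complex.ofReal_pow, Real.sq_sqrt (by norm_num)]; simp
  have hsqrt_neg2 : (Complex.I * (Real.sqrt 2 : ℂ)) ^ 2 = algebraMap ℚ ℂ (-2) := by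
    rw [mul_pow, Complex.I_sq, ← Complex.ofReal_pow, Real.sq_sqrt (by norm_num)]; simp
  have := finiteDimensional_adjoin_pair_of_sq_eq hsqrt37 hsqrt_neg2
  have hcop : (quintic ℚ).natDegree.Coprime (finrank ℚ ℚ⟮(Real.sqrt 37 : ℂ),
      Complex.I * (Real.sqrt 2 : ℂ)⟯) := by
    rw [natDegree_quintic]
    exact Nat.coprime_of_lt_prime finrank_pos.ne'
      ((finrank_adjoin_pair_le_four_of_sq_eq hsqrt37 hsqrt_neg2).trans_lt (by norm_num))
      Nat.prime_five
  change Irreducible (quintic _)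
  rw [← map_quintic (algebraMap ℚ _)]
  exact irreducible_quintic_rat.map_of_coprime_finrank hcop
end

section
/- The polynomial X⁴ − 37X³ − 592X² − 2738X − 4107 is irreducible over the imaginary quadratic field ℚ(√−111), the subfield of ℂ generated over ℚ by i√111. -/
/-!
Over ℚ the quartic is irreducible because its reduction mod 2, `X⁴ + X³ + 1`, is irreducible
over `𝔽₂`. It has a real root `θ`, so `ℚ(θ) ⊆ ℝ` does not contain `i√111`. Hence `ℚ(√−111, θ)`
has degree at least `2 · 4` over `ℚ`, so `θ` still has degree `4` over the quadratic field
`ℚ(√−111)` and the quartic is its minimal polynomial there.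
-/

open Polynomial IntermediateField Module

theorem Polynomial.Monic.irreducible_of_natDegree_eq_four {R : Type*} [CommRing R]
    [NoZeroDivisors R] {p : R[X]} (hp : p.Monic) (hdeg : p.natDegree = 4)
    (hroot : ∀ x, ¬ p.IsRoot x) (hquad : ∀ q : R[X], q.Monic → q.natDegree = 2 → ¬ q ∣ p) :
    Irreducible p := by
  have hp1 : p ≠ 1 := by rintro rfl; simp at hdeg
  rw [hp.irreducible_iff_lt_natDegree_lt hp1, hdeg]
  intro q hq hqdeg
  obtain hq1 | hq2 : q.natDegree = 1 ∨ q.natDegree = 2 := by rw [Finset.mem_Ioc] at hqdeg; omega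
  · rw [hq.eq_X_add_C hq1, ← sub_neg_eq_add, ← C_neg, dvd_iff_isRoot]
    exact hroot _
  · exact hquad q hq hq2

theorem ZMod.eq_X_sq_add_X_add_one_of_forall_not_isRoot {q : (ZMod 2)[X]} (hq : q.Monic)
    (hdeg : q.natDegree = 2) (hroot : ∀ x, ¬ q.IsRoot x) : q = X ^ 2 + X + 1 := by
  have hrep : q = X ^ 2 + C (q.coeff 1) * X + C (q.coeff 0) := by
    conv_lhs => rw [hq.as_sum, hdeg]
    simp only [Finset.sum_range_succ, Finset.range_one, Finset.sum_singleton, pow_zero, mul_one,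
      pow_one]
    ring
  have hcoeff : ∀ b c : ZMod 2, c ≠ 0 → 1 + b + c ≠ 0 → b = 1 ∧ c = 1 := by decide
  rw [hrep] at hroot ⊢
  obtain ⟨hb, hc⟩ := hcoeff _ _ (by simpa using hroot 0) (by simpa using hroot 1)
  rw [hb, hc, map_one, one_mul]

theorem ZMod.irreducible_X_pow_four_add_X_pow_three_add_one :
    Irreducible (X ^ 4 + X ^ 3 + 1 : (ZMod 2)[X]) := by
  have hroot : ∀ x : ZMod 2, ¬ (X ^ 4 + X ^ 3 + 1 : (ZMod 2)[X]).IsRoot x := by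
    simp only [IsRoot.def, eval_add, eval_pow, eval_X, eval_one]
    decide
  refine Monic.irreducible_of_natDegree_eq_four (by monicity!) (by compute_degree!) hroot
    fun q hq hdeg hdvd => ?_
  obtain rfl : q = X ^ 2 + X + 1 :=
    ZMod.eq_X_sq_add_X_add_one_of_forall_not_isRoot hq hdeg fun x hx => hroot x (hx.dvd hdvd)
  have hdvdX : X ^ 2 + X + 1 ∣ (X : (ZMod 2)[X]) := by
    rwa [show (X ^ 4 + X ^ 3 + 1 : (ZMod 2)[X]) = (X ^ 2 + X + 1) * (X ^ 2 + 1) + X by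
      ring_nf; reduce_mod_char, dvd_add_right (dvd_mul_right _ _)] at hdvd
  have hle := natDegree_le_of_dvd hdvdX X_ne_zero
  rw [hdeg, natDegree_X] at hle
  omega

section

variable {F L : Type*} [Field F] [Field L] [Algebra F L]

theorem isIntegral_of_sq_eq_algebraMap {α : L} {a : F} (h : α ^ 2 = algebraMap F L a) :
    IsIntegral F α :=
  ⟨X ^ 2 - C a, monic_X_pow_sub_C a two_ne_zero, by simp [h]⟩

theorem natDegree_minpoly_le_two_of_sq_eq_algebraMap {α : L} {a : F}
    (h : α ^ 2 = algebraMap F L a) : (minpoly F α).natDegree ≤ 2 := by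
  have hdvd : minpoly F α ∣ X ^ 2 - C a := minpoly.dvd F α (by simp [h])
  simpa [natDegree_X_pow_sub_C] using natDegree_le_of_dvd hdvd (X_pow_sub_C_ne_zero two_pos a)

theorem IntermediateField.minpoly_eq_map_of_finrank_le_two {K : IntermediateField F L}
    [FiniteDimensional F K] (hK : finrank F K ≤ 2) {θ : L} (hθ : IsIntegral F θ)
    (hKθ : ¬ K ≤ F⟮θ⟯) : minpoly K θ = (minpoly F θ).map (algebraMap F K) := by
  have hθK : IsIntegral K θ := hθ.tower_top
  set E := K⟮θ⟯.restrictScalars F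
  have hθE : F⟮θ⟯ ≤ E := adjoin_simple_le_iff.mpr (mem_adjoin_simple_self K θ)
  have hKE : K ≤ E := fun x hx => K⟮θ⟯.algebraMap_mem ⟨x, hx⟩
  have hrank_θ : finrank F F⟮θ⟯ * relfinrank F⟮θ⟯ E = finrank F E :=
    finrank_bot_mul_relfinrank hθE
  have hrank_K : finrank F K * finrank K K⟮θ⟯ = finrank F E := by
    rw [← finrank_bot_mul_relfinrank hKE, relfinrank_eq_finrank_of_le hKE]
    rfl
  have hrel : relfinrank F⟮θ⟯ E ≠ 1 :=
    fun h => hKθ (hKE.trans (relfinrank_eq_one_iff.mp h))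
  rw [adjoin.finrank hθ] at hrank_θ
  rw [adjoin.finrank hθK] at hrank_K
  have hpos : 0 < finrank F E :=
    hrank_K ▸ Nat.mul_pos finrank_pos (minpoly.natDegree_pos hθK)
  have hrel_two : 2 ≤ relfinrank F⟮θ⟯ E := by
    have : relfinrank F⟮θ⟯ E ≠ 0 := by rintro h; rw [h, mul_zero] at hrank_θ; omega
    omega
  have hdeg : (minpoly F θ).natDegree * 2 ≤ 2 * (minpoly K θ).natDegree :=
    calc (minpoly F θ).natDegree * 2
        ≤ (minpoly F θ).natDegree * relfinrank F⟮θ⟯ E := Nat.mul_le_mul_left _ hrel_two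
      _ = finrank F K * (minpoly K θ).natDegree := hrank_θ.trans hrank_K.symm
      _ ≤ 2 * (minpoly K θ).natDegree := Nat.mul_le_mul_right _ hK
  refine (eq_of_monic_of_dvd_of_natDegree_le (minpoly.monic hθK) ((minpoly.monic hθ).map _)
    (minpoly.dvd_map_of_isScalarTower F K θ) ?_).symm
  rw [natDegree_map]
  omega

end

theorem Complex.im_eq_zero_of_mem_adjoin_ofReal {r : ℝ} {z : ℂ} (hz : z ∈ ℚ⟮(r : ℂ)⟯) :
    z.im = 0 := by
  rw [show ({(r : ℂ)} : Set ℂ) = Complex.ofRealAm.restrictScalars ℚ '' {r} by simp,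
    ← adjoin_map, mem_map] at hz
  obtain ⟨y, -, rfl⟩ := hz
  simp

noncomputable def quartic (R : Type*) [CommRing R] : R[X] :=
  X ^ 4 - 37 * X ^ 3 - 592 * X ^ 2 - 2738 * X - 4107

theorem quartic_monic (R : Type*) [CommRing R] [Nontrivial R] : (quartic R).Monic := by
  unfold quartic; monicity!

theorem map_quartic {R S : Type*} [CommRing R] [CommRing S] (f : R →+* S) :
    (quartic R).map f = quartic S := by
  simp [quartic]

theorem quartic_zmod_two : quartic (ZMod 2) = X ^ 4 + X ^ 3 + 1 := by
  unfold quartic; reduce_mod_char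

theorem irreducible_quartic_rat : Irreducible (quartic ℚ) := by
  have hZ : Irreducible (quartic ℤ) :=
    (quartic_monic ℤ).irreducible_of_irreducible_map (Int.castRingHom (ZMod 2)) _ <| by
      rw [map_quartic, quartic_zmod_two]
      exact ZMod.irreducible_X_pow_four_add_X_pow_three_add_one
  rw [← map_quartic (Int.castRingHom ℚ)]
  exact (IsPrimitive.Int.irreducible_iff_irreducible_map_cast (quartic_monic ℤ).isPrimitive).mp hZ

theorem exists_real_aeval_quartic_eq_zero : ∃ θ : ℝ, aeval θ (quartic ℚ) = 0 := by
  simp only [aeval_def, eval₂_eq_eval_map, map_quartic]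
  have hsign : 0 ∈ Set.Icc ((quartic ℝ).eval 0) ((quartic ℝ).eval 50) := by
    norm_num [quartic]
  obtain ⟨θ, -, hθ⟩ := intermediate_value_Icc (by norm_num) (quartic ℝ).continuousOn hsign
  exact ⟨θ, hθ⟩

/-- The quartic `X⁴ − 37X³ − 592X² − 2738X − 4107` is irreducible over the imaginary
quadratic field `ℚ(√−111)`. -/
theorem quartic_irreducible_over_Q_sqrt_neg111 :
    Irreducible (Polynomial.X ^ 4 - 37 * Polynomial.X ^ 3 - 592 * Polynomial.X ^ 2
        - 2738 * Polynomial.X - 4107 :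
      Polynomial (IntermediateField.adjoin ℚ
        ({Complex.I * (Real.sqrt 111 : ℂ)} : Set ℂ))) := by
  set α : ℂ := Complex.I * (Real.sqrt 111 : ℂ)
  have hα : α ^ 2 = algebraMap ℚ ℂ (-111) := by
    simp [α, mul_pow, ← Complex.ofReal_pow]
  have hαint := isIntegral_of_sq_eq_algebraMap hα
  have : FiniteDimensional ℚ ℚ⟮α⟯ := adjoin.finiteDimensional hαint
  obtain ⟨θ, hθ⟩ := exists_real_aeval_quartic_eq_zero
  have hθroot : aeval (θ : ℂ) (quartic ℚ) = 0 := by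
    rw [← Complex.coe_algebraMap, aeval_algebraMap_apply, hθ, map_zero]
  have hθint : IsIntegral ℚ (θ : ℂ) := ⟨quartic ℚ, quartic_monic ℚ, hθroot⟩
  have hminpoly : minpoly ℚ (θ : ℂ) = quartic ℚ :=
    (minpoly.eq_of_irreducible_of_monic irreducible_quartic_rat hθroot (quartic_monic ℚ)).symm
  have hα_not_real : ¬ ℚ⟮α⟯ ≤ ℚ⟮(θ : ℂ)⟯ := fun h => by
    have := Complex.im_eq_zero_of_mem_adjoin_ofReal (h (mem_adjoin_simple_self ℚ α))
    simp [α] at this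
  have hminpoly_α : minpoly ℚ⟮α⟯ (θ : ℂ) = quartic ℚ⟮α⟯ := by
    rw [minpoly_eq_map_of_finrank_le_two
      (by rw [adjoin.finrank hαint]; exact natDegree_minpoly_le_two_of_sq_eq_algebraMap hα)
      hθint hα_not_real, hminpoly, map_quartic]
  show Irreducible (quartic _)
  exact hminpoly_α ▸ minpoly.irreducible hθint.tower_top
end

section
/- The polynomial X⁶ − 242X⁵ − 6671X⁴ − 70596X³ − 369297X² − 961038X − 998001 is irreducible over the imaginary quadratic field ℚ(√−259), the subfield of ℂ generated over ℚ by i√259. -/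
/-!
Reduced mod 5 the sextic is `X⁶ + 3X⁵ + 4X⁴ + 4X³ + 3X² + 2X + 4`, which has no monic factor of
degree 1, 2 or 3 over `𝔽₅`, so it is irreducible over `ℤ_[5]` and, by Gauss's lemma, over `ℚ_[5]`.
Since `-259 ≡ 1 (mod 5)`, Hensel's lemma gives a square root of `-259` in `ℚ_[5]`, hence a field
embedding `ℚ(√−259) → ℚ_[5]`; a monic polynomial irreducible after such a map is irreducible.
-/

open Polynomial Finset IntermediateField

instance Nat.fact_prime_five : Fact (Nat.Prime 5) := ⟨by norm_num⟩

theorem minpoly_eq_X_sq_sub_C {F K : Type*} [Field F] [Field K] [Algebra F K] {α : K} {d : F}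
    (hd : ¬IsSquare d) (hα : α ^ 2 = algebraMap F K d) : minpoly F α = X ^ 2 - C d :=
  (minpoly.eq_of_irreducible_of_monic
    (X_pow_sub_C_irreducible_of_prime Nat.prime_two fun b hb => hd ⟨b, by rw [← hb, sq]⟩)
    (by simp [hα]) (monic_X_pow_sub_C d two_ne_zero)).symm

theorem IntermediateField.nonempty_algHom_adjoin_of_sq_eq {F K L : Type*} [Field F] [Field K]
    [Field L] [Algebra F K] [Algebra F L] {α : K} {β : L} {d : F} (hd : ¬IsSquare d)
    (hα : α ^ 2 = algebraMap F K d) (hβ : β ^ 2 = algebraMap F L d) :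
    Nonempty (F⟮α⟯ →ₐ[F] L) := by
  have hint : IsIntegral F α :=
    ⟨X ^ 2 - C d, monic_X_pow_sub_C d two_ne_zero, by simp [hα]⟩
  refine ⟨(algHomAdjoinIntegralEquiv F hint).symm ⟨β, ?_⟩⟩
  rw [minpoly_eq_X_sq_sub_C hd hα, mem_aroots]
  exact ⟨(monic_X_pow_sub_C d two_ne_zero).ne_zero, by simp [hβ]⟩

theorem PadicInt.exists_sq_eq_of_norm_sq_sub_lt_one {p : ℕ} [Fact p.Prime] (hp : p ≠ 2)
    {a z : ℤ_[p]} (hz : ‖z‖ = 1) (h : ‖z ^ 2 - a‖ < 1) : ∃ y : ℤ_[p], y ^ 2 = a := by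
  have h2 : ‖(2 : ℤ_[p])‖ = 1 := by
    exact_mod_cast PadicInt.norm_natCast_eq_one_iff.mpr
      ((Nat.coprime_primes Fact.out Nat.prime_two).mpr hp)
  obtain ⟨y, hy, -⟩ := hensels_lemma (F := X ^ 2 - C a) (a := z) (by
    simpa [one_add_one_eq_two, h2, hz] using h)
  exact ⟨y, by simpa [sub_eq_zero] using hy⟩

theorem PadicInt.irreducible_map_of_irreducible_map_toZMod {p : ℕ} [Fact p.Prime]
    {f : ℤ_[p][X]} (hf : f.Monic) (h : Irreducible (f.map toZMod)) :
    Irreducible (f.map (algebraMap ℤ_[p] ℚ_[p])) :=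
  hf.irreducible_iff_irreducible_map_fraction_map.mp (hf.irreducible_of_irreducible_map _ _ h)

noncomputable def sextic (R : Type*) [CommRing R] : R[X] :=
  X ^ 6 - 242 * X ^ 5 - 6671 * X ^ 4 - 70596 * X ^ 3 - 369297 * X ^ 2 - 961038 * X - 998001

theorem sextic_map {R S : Type*} [CommRing R] [CommRing S] (f : R →+* S) :
    (sextic R).map f = sextic S := by
  simp [sextic]

theorem monic_sextic (R : Type*) [CommRing R] [Nontrivial R] : (sextic R).Monic := by
  unfold sextic; monicity!

theorem natDegree_sextic (R : Type*) [CommRing R] [Nontrivial R] : (sextic R).natDegree = 6 := by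
  unfold sextic; compute_degree!

theorem coeff_sextic_zmod_five {n : ℕ} (hn : n ≤ 5) :
    (sextic (ZMod 5)).coeff n = [4, 2, 3, 4, 4, 3].getD n 0 := by
  interval_cases n <;> simp [sextic, coeff_X_pow, coeff_X] <;> decide

/- Coefficient equations of a factorisation of the sextic mod 5 into monic factors with lower
coefficients `aᵢ` and `sᵢ`; the left-hand sides are its coefficients of `X⁰, …, X⁵`. -/
theorem not_linear_times_quintic : ∀ a s₀ s₁ s₂ s₃ s₄ : ZMod 5,
    ¬(4 = a * s₀ ∧ 2 = a * s₁ + s₀ ∧ 3 = a * s₂ + s₁ ∧ 4 = a * s₃ + s₂ ∧ 4 = a * s₄ + s₃ ∧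
      3 = a + s₄) := by
  decide

theorem not_quadratic_times_quartic : ∀ a₀ a₁ s₀ s₁ s₂ s₃ : ZMod 5,
    ¬(4 = a₀ * s₀ ∧ 2 = a₀ * s₁ + a₁ * s₀ ∧ 3 = a₀ * s₂ + a₁ * s₁ + s₀ ∧
      4 = a₀ * s₃ + a₁ * s₂ + s₁ ∧ 4 = a₀ + a₁ * s₃ + s₂ ∧ 3 = a₁ + s₃) := by
  decide

theorem not_cubic_times_cubic : ∀ a₀ a₁ a₂ s₀ s₁ s₂ : ZMod 5,
    ¬(4 = a₀ * s₀ ∧ 2 = a₀ * s₁ + a₁ * s₀ ∧ 3 = a₀ * s₂ + a₁ * s₁ + a₂ * s₀ ∧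
      4 = a₀ + a₁ * s₂ + a₂ * s₁ + s₀ ∧ 4 = a₁ + a₂ * s₂ + s₁ ∧ 3 = a₂ + s₂) := by
  decide

theorem irreducible_sextic_zmod_five : Irreducible (sextic (ZMod 5)) := by
  have hP := monic_sextic (ZMod 5)
  refine (hP.irreducible_iff_lt_natDegree_lt fun h => ?_).mpr ?_
  · simpa [natDegree_sextic] using congrArg natDegree h
  rintro q hq hdeg ⟨s, hqs⟩
  have hs : s.Monic := hq.of_mul_monic_left (hqs ▸ hP)
  have hsum : q.natDegree + s.natDegree = 6 := by
    rw [← hq.natDegree_mul hs, ← hqs, natDegree_sextic]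
  have E (n : ℕ) (hn : n ≤ 5) :
      ([4, 2, 3, 4, 4, 3].getD n 0 : ZMod 5) =
        ∑ i ∈ range (n + 1), q.coeff i * s.coeff (n - i) := by
    rw [← coeff_sextic_zmod_five hn, hqs, coeff_mul, Nat.sum_antidiagonal_eq_sum_range_succ_mk]
  have e₀ := E 0 (by norm_num); have e₁ := E 1 (by norm_num); have e₂ := E 2 (by norm_num)
  have e₃ := E 3 (by norm_num); have e₄ := E 4 (by norm_num); have e₅ := E 5 (by norm_num)
  rw [natDegree_sextic, mem_Ioc] at hdeg
  obtain ⟨hq₀, hq₃⟩ := hdeg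
  have hsd : s.natDegree = 6 - q.natDegree := by omega
  have hq_top := hq.coeff_natDegree
  have hs_top : s.coeff (6 - q.natDegree) = 1 := hsd ▸ hs.coeff_natDegree
  interval_cases hd : q.natDegree <;>
    simp [sum_range_succ, coeff_eq_zero_of_natDegree_lt, hd, hsd, hq_top, hs_top]
      at e₀ e₁ e₂ e₃ e₄ e₅
  · exact not_linear_times_quintic _ _ _ _ _ _ ⟨e₀, e₁, e₂, e₃, e₄, e₅⟩
  · exact not_quadratic_times_quartic _ _ _ _ _ _ ⟨e₀, e₁, e₂, e₃, e₄, e₅⟩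
  · exact not_cubic_times_cubic _ _ _ _ _ _ ⟨e₀, e₁, e₂, e₃, e₄, e₅⟩

/-- The sextic `X⁶ − 242X⁵ − 6671X⁴ − 70596X³ − 369297X² − 961038X − 998001` is irreducible
over the imaginary quadratic field `ℚ(√−259)`. -/
theorem sextic_irreducible_over_Q_sqrt_neg259 :
    Irreducible (Polynomial.X ^ 6 - 242 * Polynomial.X ^ 5 - 6671 * Polynomial.X ^ 4
        - 70596 * Polynomial.X ^ 3 - 369297 * Polynomial.X ^ 2 - 961038 * Polynomial.X
        - 998001 :
      Polynomial (IntermediateField.adjoin ℚ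
        ({Complex.I * (Real.sqrt 259 : ℂ)} : Set ℂ))) := by
  obtain ⟨r, hr⟩ : ∃ r : ℤ_[5], r ^ 2 = -259 :=
    PadicInt.exists_sq_eq_of_norm_sq_sub_lt_one (by norm_num) norm_one (by
      rw [show (1 : ℤ_[5]) ^ 2 - -259 = ((260 : ℕ) : ℤ_[5]) by norm_num,
        PadicInt.norm_natCast_lt_one_iff]
      norm_num)
  have hα : (Complex.I * (Real.sqrt 259 : ℂ)) ^ 2 = algebraMap ℚ ℂ (-259) := by
    rw [mul_pow, Complex.I_sq, ← Complex.ofReal_pow, Real.sq_sqrt (by norm_num)]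
    simp
  have hd : ¬IsSquare (-259 : ℚ) := by
    rintro ⟨b, hb⟩; nlinarith [mul_self_nonneg b]
  obtain ⟨φ⟩ := nonempty_algHom_adjoin_of_sq_eq (L := ℚ_[5]) (β := (r : ℚ_[5])) hd hα
    (by exact_mod_cast congrArg ((↑) : ℤ_[5] → ℚ_[5]) hr)
  have hQ₅ : Irreducible (sextic ℚ_[5]) := by
    rw [← sextic_map (algebraMap ℤ_[5] ℚ_[5])]
    exact PadicInt.irreducible_map_of_irreducible_map_toZMod (monic_sextic _)
      (by rw [sextic_map]; exact irreducible_sextic_zmod_five)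
  exact (monic_sextic _).irreducible_of_irreducible_map φ.toRingHom (sextic _)
    (by rwa [sextic_map])
end
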